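/- For every n ≥ 1, the number of planar binary trees with n leaves whose internal nodes are labeled by elements of the two-element set {≺, ≻}, subject to the restriction that the only allowed left-growth pattern is (≻, ≺) — i.e., whenever the left child w of an internal node v is itself an internal node, then v is labeled ≻ and w is labeled ≺ — equals the n-th Catalan number C_n = (1/(n+1))·binom(2n, n). (These labeled trees are the normal monomials for the Gröbner–Shirshov basis of the nonsymmetric dendriform operad with respect to the path-lexicographic order and the order of operations ≺ < ≻.) -/

import Mathlib

/-- Operation labels `≺` (prec) and `≻` (succ). -/
inductive DendOp where
  | prec
  | succ
deriving DecidableEq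

/-- Planar (full) binary trees with internal nodes labeled by `L` and unlabeled leaves. -/
inductive PBTree (L : Type) where
  | leaf : PBTree L
  | node : L → PBTree L → PBTree L → PBTree L

/-- Number of leaves of a planar binary tree. -/
def PBTree.leaves {L : Type} : PBTree L → ℕ
  | .leaf => 1
  | .node _ l r => l.leaves + r.leaves

/-- Normality: the only allowed left-growth pattern is `(≻, ≺)`, i.e. whenever the left
child of an internal node is itself internal, the node is labeled `≻` and its left
child is labeled `≺`. -/
def PBTree.normalDend : PBTree DendOp → Prop
  | .leaf => True
  | .node _ .leaf r => r.normalDend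
  | .node op (.node q a b) r =>
      op = DendOp.succ ∧ q = DendOp.prec ∧ (PBTree.node q a b).normalDend ∧ r.normalDend

/-! A normal tree is a leaf, `≺(leaf, r)`, `≻(leaf, r)` or `≻(≺(leaf, b), r)` with `b`, `r` normal.
Sending these four shapes to a node with children `(nil, nil)`, `(nil, r)`, `(r, nil)`, `(b, r)`
(all children transformed recursively) is a bijection from normal trees with `n` leaves onto
unlabeled binary trees with `n` internal nodes, which are counted by `catalan n`. -/

open BinaryTree

namespace PBTree

theorem normalDend_node_node {op q : DendOp} {a b r : PBTree DendOp} :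
    (node op (node q a b) r).normalDend ↔
      op = .succ ∧ q = .prec ∧ a = leaf ∧ b.normalDend ∧ r.normalDend := by
  cases a with
  | leaf => simp [normalDend]
  | node => simp only [normalDend]; grind

def toBinaryTree : PBTree DendOp → BinaryTree Unit
  | leaf => nil △ nil
  | node .prec leaf r => nil △ r.toBinaryTree
  | node .succ leaf r => r.toBinaryTree △ nil
  | node _ (node _ _ b) r => b.toBinaryTree △ r.toBinaryTree

theorem toBinaryTree_ne_nil (t : PBTree DendOp) : t.toBinaryTree ≠ nil := by
  fun_cases toBinaryTree t <;> simp

theorem numNodes_toBinaryTree {t : PBTree DendOp} (ht : t.normalDend) :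
    t.toBinaryTree.numNodes = t.leaves := by
  induction t using toBinaryTree.induct with
  | case1 => rfl
  | case2 r ih | case3 r ih => simp [toBinaryTree, leaves, ih ht]; omega
  | case4 _ _ a b r ihb ihr =>
    obtain ⟨-, -, rfl, hb, hr⟩ := normalDend_node_node.mp ht
    simp [toBinaryTree, leaves, ihb hb, ihr hr]; omega

end PBTree

namespace BinaryTree

def toNormalDend : BinaryTree Unit → PBTree DendOp
  | nil => .leaf -- junk value: `nil` has no node, so `leaves_toNormalDend` excludes it
  | node _ nil nil => .leaf
  | node _ nil r@(node ..) => .node .prec .leaf r.toNormalDend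
  | node _ l@(node ..) nil => .node .succ .leaf l.toNormalDend
  | node _ l@(node ..) r@(node ..) => .node .succ (.node .prec .leaf l.toNormalDend) r.toNormalDend

theorem normalDend_toNormalDend (s : BinaryTree Unit) : s.toNormalDend.normalDend := by
  induction s using toNormalDend.induct with
  | case1 | case2 => simp [toNormalDend, PBTree.normalDend]
  | case3 _ _ _ _ ih | case4 _ _ _ _ ih => simpa [toNormalDend, PBTree.normalDend] using ih
  | case5 _ _ _ _ _ _ _ ihl ihr =>
    simpa [toNormalDend] using PBTree.normalDend_node_node.mpr ⟨rfl, rfl, rfl, ihl, ihr⟩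

theorem leaves_toNormalDend {s : BinaryTree Unit} (hs : s ≠ nil) :
    s.toNormalDend.leaves = s.numNodes := by
  induction s using toNormalDend.induct with
  | case1 => exact absurd rfl hs
  | case2 => simp [toNormalDend, PBTree.leaves]
  | case3 _ _ _ _ ih | case4 _ _ _ _ ih =>
    simp [toNormalDend, PBTree.leaves, ih (by simp)]; omega
  | case5 _ _ _ _ _ _ _ ihl ihr =>
    simp [toNormalDend, PBTree.leaves, ihl (by simp), ihr (by simp)]; omega

theorem toBinaryTree_toNormalDend {s : BinaryTree Unit} (hs : s ≠ nil) :
    s.toNormalDend.toBinaryTree = s := by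
  induction s using toNormalDend.induct with
  | case1 => exact absurd rfl hs
  | case2 => simp [toNormalDend, PBTree.toBinaryTree]
  | case3 _ _ _ _ ih | case4 _ _ _ _ ih =>
    simp [toNormalDend, PBTree.toBinaryTree, ih (by simp)]
  | case5 _ _ _ _ _ _ _ ihl ihr =>
    simp [toNormalDend, PBTree.toBinaryTree, ihl (by simp), ihr (by simp)]

end BinaryTree

namespace PBTree

theorem toNormalDend_toBinaryTree {t : PBTree DendOp} (ht : t.normalDend) :
    t.toBinaryTree.toNormalDend = t := by
  induction t using toBinaryTree.induct with
  | case1 => simp [toBinaryTree, toNormalDend]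
  | case2 r ih | case3 r ih =>
    have ih := ih ht
    have hr := toBinaryTree_ne_nil r
    cases h : r.toBinaryTree with
    | nil => contradiction
    | node => simp_all [toBinaryTree, toNormalDend]
  | case4 _ _ a b r ihb ihr =>
    obtain ⟨rfl, rfl, rfl, hb, hr⟩ := normalDend_node_node.mp ht
    have hb' := toBinaryTree_ne_nil b
    have hr' := toBinaryTree_ne_nil r
    cases h : b.toBinaryTree <;> cases h' : r.toBinaryTree <;> simp_all [toBinaryTree, toNormalDend]

theorem bijOn_toBinaryTree {n : ℕ} (hn : 1 ≤ n) :
    Set.BijOn toBinaryTree {t | t.leaves = n ∧ t.normalDend} {s | s.numNodes = n} := by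
  refine Set.InvOn.bijOn (f' := toNormalDend) ⟨?_, ?_⟩ ?_ ?_
  · rintro t ⟨-, ht⟩
    exact toNormalDend_toBinaryTree ht
  · rintro s hs
    exact toBinaryTree_toNormalDend (by rintro rfl; simp at hs; omega)
  · rintro t ⟨rfl, ht⟩
    exact numNodes_toBinaryTree ht
  · rintro s rfl
    exact ⟨leaves_toNormalDend (by rintro rfl; simp at hn), normalDend_toNormalDend s⟩

end PBTree

/-- the number of `{≺,≻}`-labeled planar binary trees with `n` leaves whose
only left-growth pattern is `(≻,≺)` equals the `n`-th Catalan number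
`C n = binom(2n, n)/(n+1)`. -/
theorem count_normal_dendriform_trees (n : ℕ) (hn : 1 ≤ n) :
    {t : PBTree DendOp | t.leaves = n ∧ t.normalDend}.ncard =
      (2 * n).choose n / (n + 1) := by
  rw [(PBTree.bijOn_toBinaryTree hn).ncard_eq, ← coe_treesOfNumNodesEq, Set.ncard_coe_finset,
    treesOfNumNodesEq_card_eq_catalan, catalan_eq_centralBinom_div, Nat.centralBinom]
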